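/- arXiv:2309.14188 — 5 statements merged into one kernel-verified Lean document; each statement's English description precedes it below -/
import Mathlib

section
/- Let A be a unital C*-algebra and q_1, …, q_n projections summing to 1. Any x ∈ A with vanishing diagonal corners q_i x q_i = 0 can be written as x = s + t, where s = Σ_{i<j} (q_i x q_j + (q_i x q_j)*) is self-adjoint, i.e. the self-adjoint off-diagonal symmetrization whose (i,j) entry for i<j is q_i x q_j and for i>j is (q_j x q_i)*, and t = x − s is nilpotent with t^n = 0. -/
open scoped BigOperators

/-- The self-adjoint off-diagonal symmetrization `s = Σ_{i<j} (q_i x q_j + (q_i x q_j)*)`. -/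
def offDiagSym {A : Type*} [Ring A] [StarRing A] (n : ℕ) (q : Fin n → A) (x : A) : A :=
  ∑ i : Fin n, ∑ j : Fin n,
    if (i : ℕ) < (j : ℕ) then q i * x * q j + star (q i * x * q j) else 0

/-- Let `q_1, …, q_n` be projections in a unital C*-algebra summing to `1` and let `x` have
vanishing diagonal corners `q_i x q_i = 0`.  Then `x = s + t` where
`s = Σ_{i<j} (q_i x q_j + (q_i x q_j)*)` is self-adjoint and `t = x − s` is nilpotent with
`t^n = 0`. -/
theorem stmt7 {A : Type*}
    [NormedRing A] [StarRing A] [CStarRing A] [NormedAlgebra ℂ A] [StarModule ℂ A]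
    [CompleteSpace A]
    {n : ℕ} (hn : 0 < n) (q : Fin n → A)
    (hsa : ∀ i, IsSelfAdjoint (q i)) (hidem : ∀ i, IsIdempotentElem (q i))
    (horth : ∀ i j, i ≠ j → q i * q j = 0)
    (hsum : ∑ i : Fin n, q i = 1)
    (x : A) (hx : ∀ i, q i * x * q i = 0) :
    IsSelfAdjoint (offDiagSym n q x) ∧
    (x - offDiagSym n q x) ^ n = 0 ∧
    x = offDiagSym n q x + (x - offDiagSym n q x) := by
  set s := offDiagSym n q x with hs
  have hqs : ∀ i, star (q i) = q i := fun i => hsa i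
  have hq : ∀ a b : Fin n, q a * q b = if a = b then q a else 0 := by
    intro a b
    split
    · next h => subst h; exact hidem a
    · next h => exact horth a b h
  have hq' : ∀ a b (c : A), q a * (q b * c) = if a = b then q a * c else 0 := by
    intro a b c; rw [← mul_assoc, hq]; split <;> simp
  -- self-adjointness of s
  have hSA : IsSelfAdjoint s := by
    rw [hs, offDiagSym, IsSelfAdjoint, star_sum]
    refine Finset.sum_congr rfl fun i _ => ?_
    rw [star_sum]
    refine Finset.sum_congr rfl fun j _ => ?_
    split <;> simp [add_comm]
  -- corner entries of s
  have hentry : ∀ i j : Fin n, (i:ℕ) ≤ (j:ℕ) →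
      q i * s * q j = if (i:ℕ) < (j:ℕ) then q i * x * q j else 0 := by
    intro i j hij
    rw [hs, offDiagSym]
    simp only [Finset.mul_sum, Finset.sum_mul]
    rw [Finset.sum_eq_single i]
    · rw [Finset.sum_eq_single j]
      · split_ifs with h1 <;>
        · simp only [mul_add, add_mul, star_mul, star_star, hqs, mul_assoc, hq', hq,
            mul_ite, ite_mul, zero_mul, mul_zero, add_zero, zero_add, if_true, if_pos rfl]
          all_goals (split_ifs <;> (try simp_all) <;> try omega)
      · intro b _ hbj
        split_ifs with h1 <;>
        · simp only [mul_add, add_mul, star_mul, star_star, hqs, mul_assoc, hq', hq,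
            mul_ite, ite_mul, zero_mul, mul_zero, add_zero, zero_add]
          all_goals (split_ifs <;> (try simp_all) <;> try omega)
      · simp
    · intro a _ hai
      apply Finset.sum_eq_zero
      intro b _
      split_ifs with h1 <;>
      · simp only [mul_add, add_mul, star_mul, star_star, hqs, mul_assoc, hq', hq,
          mul_ite, ite_mul, zero_mul, mul_zero, add_zero, zero_add]
        all_goals (split_ifs <;> (try simp_all) <;> try omega)
    · simp
  set t := x - s with ht
  -- t is strictly lower triangular
  have key : ∀ i j : Fin n, (i:ℕ) ≤ (j:ℕ) → q i * t * q j = 0 := by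
    intro i j hij
    rw [ht, mul_sub, sub_mul, hentry i j hij]
    rcases lt_or_eq_of_le hij with h | h
    · rw [if_pos h, sub_self]
    · have : i = j := Fin.ext h
      subst this
      rw [if_neg (lt_irrefl _), hx i, zero_sub, neg_eq_zero]
    -- done
  -- partial sums of projections
  set f : ℕ → A := fun m => ∑ i : Fin n, if m ≤ (i:ℕ) then q i else 0 with hf
  have hf0 : f 0 = 1 := by simp [hf, hsum]
  have hfn : f n = 0 := by
    rw [hf]
    apply Finset.sum_eq_zero
    intro i _
    rw [if_neg (by omega : ¬ n ≤ (i:ℕ))]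
  have hcompl : ∀ m : ℕ, (∑ i : Fin n, if (i:ℕ) < m then q i else 0) + f m = 1 := by
    intro m
    rw [hf, ← Finset.sum_add_distrib, ← hsum]
    refine Finset.sum_congr rfl fun i _ => ?_
    rcases lt_or_ge (i:ℕ) m with h | h
    · rw [if_pos h, if_neg (by omega), add_zero]
    · rw [if_neg (by omega), if_pos h, zero_add]
  have hstep : ∀ m : ℕ, t * f m = f (m + 1) * (t * f m) := by
    intro m
    have hz : (∑ i : Fin n, if (i:ℕ) < m + 1 then q i else 0) * (t * f m) = 0 := by
      rw [hf]
      simp only [Finset.sum_mul, Finset.mul_sum]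
      apply Finset.sum_eq_zero
      intro i _
      apply Finset.sum_eq_zero
      intro j _
      split_ifs <;>
        first
          | (rw [← mul_assoc]
             first
               | exact key i j (by omega)
               | exact key j i (by omega))
          | simp
    have h1 := hcompl (m + 1)
    calc t * f m = 1 * (t * f m) := (one_mul _).symm
      _ = ((∑ i : Fin n, if (i:ℕ) < m + 1 then q i else 0) + f (m+1)) * (t * f m) := by
          rw [h1]
      _ = f (m + 1) * (t * f m) := by rw [add_mul, hz, zero_add]
  have hpow : ∀ k : ℕ, t ^ k = f k * t ^ k := by
    intro k
    induction k with
    | zero => simp [hf0]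
    | succ k ih =>
        calc t ^ (k + 1) = t * t ^ k := by rw [pow_succ']
          _ = t * (f k * t ^ k) := by rw [← ih]
          _ = (t * f k) * t ^ k := by rw [mul_assoc]
          _ = (f (k+1) * (t * f k)) * t ^ k := by rw [← hstep]
          _ = f (k+1) * (t * (f k * t ^ k)) := by simp only [mul_assoc]
          _ = f (k+1) * (t * t ^ k) := by rw [← ih]
          _ = f (k+1) * t ^ (k+1) := by rw [pow_succ']
  refine ⟨hSA, ?_, by rw [ht]; abel⟩
  rw [hpow n, hfn, zero_mul]
end

section
/- For fixed α ∈ [0,1], the maximum over β ∈ [0,1] of the function max{ α − 2αβ + 2√(α(1−α)β(1−β)), −(α − 2αβ − 2√(α(1−α)β(1−β))) } is √α. -/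
/-- For fixed `α ∈ [0,1]`, the maximum over `β ∈ [0,1]` of
`max { α − 2αβ + 2√(α(1−α)β(1−β)), −(α − 2αβ − 2√(α(1−α)β(1−β))) }` is `√α`. -/
theorem stmt8 (α : ℝ) (hα : α ∈ Set.Icc (0 : ℝ) 1) :
    IsGreatest
      ((fun β : ℝ =>
        max (α - 2 * α * β + 2 * Real.sqrt (α * (1 - α) * β * (1 - β)))
            (-(α - 2 * α * β - 2 * Real.sqrt (α * (1 - α) * β * (1 - β))))) ''
        Set.Icc (0 : ℝ) 1)
      (Real.sqrt α) := by
  obtain ⟨hα0, hα1⟩ := hα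
  set r := Real.sqrt α with hrdef
  have hr0 : 0 ≤ r := Real.sqrt_nonneg α
  have hr2 : r ^ 2 = α := Real.sq_sqrt hα0
  have hr1 : r ≤ 1 := by
    rw [hrdef, show (1:ℝ) = Real.sqrt 1 by simp]
    exact Real.sqrt_le_sqrt hα1
  constructor
  · refine ⟨(1 + r) / 2, ⟨by linarith, by linarith⟩, ?_⟩
    have hs : Real.sqrt (α * (1 - α) * ((1 + r) / 2) * (1 - (1 + r) / 2))
        = r * (1 - α) / 2 := by
      have : α * (1 - α) * ((1 + r) / 2) * (1 - (1 + r) / 2)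
          = (r * (1 - α) / 2) ^ 2 := by
        ring_nf
        nlinarith [hr2]
      rw [this, Real.sqrt_sq (by nlinarith)]
    simp only [hs]
    rw [max_eq_right (by nlinarith)]
    nlinarith [hr2]
  · rintro x ⟨β, ⟨hβ0, hβ1⟩, rfl⟩
    simp only
    set s := Real.sqrt (α * (1 - α) * β * (1 - β)) with hsdef
    have hs0 : 0 ≤ s := Real.sqrt_nonneg _
    have hprod : 0 ≤ α * (1 - α) * β * (1 - β) :=
      mul_nonneg (mul_nonneg (mul_nonneg hα0 (by linarith)) hβ0) (by linarith)
    have hs2 : s ^ 2 = α * (1 - α) * β * (1 - β) := by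
      rw [hsdef]; exact Real.sq_sqrt hprod
    have hra : α ≤ r := by nlinarith
    have key1 : (r - α + 2*α*β)^2 - (2*s)^2 = α * (1 - 2*β - r)^2 := by
      linear_combination (1 - α) * hr2 - 4 * hs2
    have key2 : (r + α - 2*α*β)^2 - (2*s)^2 = α * (1 - 2*β + r)^2 := by
      linear_combination (1 - α) * hr2 - 4 * hs2
    have hαβ : 0 ≤ α * β := mul_nonneg hα0 hβ0
    have hαβ' : α * β ≤ α := by nlinarith
    have hR1 : 0 ≤ r - α + 2*α*β := by linarith
    have hR2 : 0 ≤ r + α - 2*α*β := by linarith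
    have h1 : 2*s ≤ r - α + 2*α*β := by
      have hsq : (2*s)^2 ≤ (r - α + 2*α*β)^2 := by
        nlinarith [mul_nonneg hα0 (sq_nonneg (1 - 2*β - r))]
      exact (pow_le_pow_iff_left₀ (by linarith) hR1 two_ne_zero).mp hsq
    have h2 : 2*s ≤ r + α - 2*α*β := by
      have hsq : (2*s)^2 ≤ (r + α - 2*α*β)^2 := by
        nlinarith [mul_nonneg hα0 (sq_nonneg (1 - 2*β + r))]
      exact (pow_le_pow_iff_left₀ (by linarith) hR2 two_ne_zero).mp hsq
    apply max_le <;> linarith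
end

section
/- If B and C are unital C*-subalgebras of a C*-probability space (A,ρ) that are freely independent with respect to ρ, and the restriction of ρ to each of B and C is a trace, then the restriction of ρ to the C*-subalgebra generated by B and C is a trace. -/
open scoped ComplexOrder

/-- Free independence of two subsets of a C*-probability space. -/
def FreelyIndependent {A : Type*} [NormedRing A] [StarRing A] [NormedAlgebra ℂ A]
    (ρ : A →ₗ[ℂ] ℂ) (B C : Set A) : Prop :=
  ∀ (k : ℕ) (a : Fin k → A) (s : Fin k → Bool),
    (∀ j, a j ∈ (bif s j then B else C)) →
    (∀ j, ρ (a j) = 0) →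
    (∀ (j : ℕ) (h : j + 1 < k), s ⟨j, Nat.lt_of_succ_lt h⟩ ≠ s ⟨j + 1, h⟩) →
    0 < k → ρ (List.ofFn a).prod = 0

/-!
A positive functional is hermitian and continuous. By freeness, `ρ` vanishes on every nonempty
alternating product of centred letters, and these products together with `1` span the
*-algebra generated by `B` and `C`: two adjacent letters from the same algebra merge into a
centred letter plus a scalar. For a centred letter `g` of `B` or `C` and such a product `w`,
both `ρ (g * w)` and `ρ (w * g)` vanish as soon as `w` has two letters (after merging `g` with
the adjacent letter if necessary); for one letter the trace property of `B` or `C` applies.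
Hence `ρ (g * y) = ρ (y * g)` for generators `g`, which spreads to the whole *-algebra and,
by continuity, to its closure.
-/

section PositiveFunctional

variable {A : Type*}

lemma map_nonneg_of_map_star_mul_self_nonneg {E : Type*} [NonUnitalSemiring A] [PartialOrder A]
    [StarRing A] [StarOrderedRing A] [AddCommMonoid E] [PartialOrder E] [IsOrderedAddMonoid E]
    {F : Type*} [FunLike F A E] [AddMonoidHomClass F A E] (ρ : F)
    (hρ : ∀ a, 0 ≤ ρ (star a * a)) {x : A} (hx : 0 ≤ x) : 0 ≤ ρ x := by
  rw [StarOrderedRing.nonneg_iff] at hx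
  induction hx using AddSubmonoid.closure_induction with
  | mem x hx => obtain ⟨a, rfl⟩ := hx; exact hρ a
  | zero => simp
  | add x y _ _ hx hy => rw [map_add]; exact add_nonneg hx hy

variable [CStarAlgebra A] {ρ : A →ₗ[ℂ] ℂ}

-- `A` carries no order instance; `ρ` is positive for the spectral order.
lemma LinearMap.map_star_of_map_star_mul_self_nonneg (hρ : ∀ a : A, 0 ≤ ρ (star a * a))
    (a : A) : ρ (star a) = star (ρ a) := by
  let := CStarAlgebra.spectralOrder A
  let := CStarAlgebra.spectralOrderedRing A
  exact map_star (PositiveLinearMap.mk₀ ρ fun _ ↦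
    map_nonneg_of_map_star_mul_self_nonneg ρ hρ) a

lemma LinearMap.continuous_of_map_star_mul_self_nonneg (hρ : ∀ a : A, 0 ≤ ρ (star a * a)) :
    Continuous ρ := by
  let := CStarAlgebra.spectralOrder A
  let := CStarAlgebra.spectralOrderedRing A
  exact map_continuous (PositiveLinearMap.mk₀ ρ fun _ ↦
    map_nonneg_of_map_star_mul_self_nonneg ρ hρ)

end PositiveFunctional

lemma star_list_prod {A : Type*} [Monoid A] [StarMul A] (l : List A) :
    star l.prod = (l.map star).reverse.prod := by
  induction l with
  | nil => simp
  | cons a l ih => simp [star_mul, ih]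

lemma prod_map_star_reverse {β A : Type*} [Monoid A] [StarMul A] (w : List (β × A)) :
    (((w.map fun p ↦ (p.1, star p.2)).reverse).map Prod.snd).prod =
      star (w.map Prod.snd).prod := by
  simp [star_list_prod, List.map_reverse, Function.comp_def]

section Words

variable {A : Type*} [Ring A] [StarRing A] [Algebra ℂ A] [StarModule ℂ A]
  (ρ : A →ₗ[ℂ] ℂ) (B C : StarSubalgebra ℂ A)

-- The letter of a pair `(b, a)` is `a`, taken from `B` if `b` is `true` and from `C` otherwise,
-- as in `FreelyIndependent`.
def IsCenteredAlternating (w : List (Bool × A)) : Prop :=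
  (∀ p ∈ w, p.2 ∈ cond p.1 B C ∧ ρ p.2 = 0) ∧ w.IsChain (fun p q ↦ p.1 ≠ q.1)

def alternatingProds : Set A :=
  {x | ∃ w, IsCenteredAlternating ρ B C w ∧ (w.map Prod.snd).prod = x}

variable {ρ B C}

lemma IsCenteredAlternating.prod_mem_span {w : List (Bool × A)}
    (hw : IsCenteredAlternating ρ B C w) :
    (w.map Prod.snd).prod ∈ Submodule.span ℂ (alternatingProds ρ B C) :=
  Submodule.subset_span ⟨w, hw, rfl⟩

lemma isCenteredAlternating_append {u v : List (Bool × A)} :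
    IsCenteredAlternating ρ B C (u ++ v) ↔ IsCenteredAlternating ρ B C u ∧
      IsCenteredAlternating ρ B C v ∧ ∀ p ∈ u.getLast?, ∀ q ∈ v.head?, p.1 ≠ q.1 := by
  simp only [IsCenteredAlternating, List.forall_mem_append, List.isChain_append]
  tauto

lemma isCenteredAlternating_singleton {p : Bool × A} :
    IsCenteredAlternating ρ B C [p] ↔ p.2 ∈ cond p.1 B C ∧ ρ p.2 = 0 := by
  simp [IsCenteredAlternating]

lemma isCenteredAlternating_cons {p : Bool × A} {w : List (Bool × A)} :
    IsCenteredAlternating ρ B C (p :: w) ↔ (p.2 ∈ cond p.1 B C ∧ ρ p.2 = 0) ∧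
      IsCenteredAlternating ρ B C w ∧ ∀ q ∈ w.head?, p.1 ≠ q.1 := by
  rw [← List.singleton_append, isCenteredAlternating_append, isCenteredAlternating_singleton]
  simp

lemma sub_smul_one_mem_and_map_eq_zero (hρ1 : ρ 1 = 1) {S : StarSubalgebra ℂ A} {x : A}
    (hx : x ∈ S) : x - ρ x • 1 ∈ S ∧ ρ (x - ρ x • 1) = 0 :=
  ⟨sub_mem hx (SMulMemClass.smul_mem _ (one_mem _)), by simp [hρ1]⟩

lemma IsCenteredAlternating.prod_mul_prod_mem_span (hρ1 : ρ 1 = 1) {u v : List (Bool × A)}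
    (hu : IsCenteredAlternating ρ B C u) (hv : IsCenteredAlternating ρ B C v) :
    (u.map Prod.snd).prod * (v.map Prod.snd).prod ∈
      Submodule.span ℂ (alternatingProds ρ B C) := by
  induction v generalizing u with
  | nil => simpa using hu.prod_mem_span
  | cons q v ih =>
    rcases u.eq_nil_or_concat' with rfl | ⟨u, p, rfl⟩
    · simpa using hv.prod_mem_span
    obtain ⟨hu', hp, hup⟩ := isCenteredAlternating_append.mp hu
    obtain ⟨hq, hv', hqv⟩ := isCenteredAlternating_cons.mp hv
    by_cases hpq : p.1 = q.1
    · -- multiply the two middle letters, which lie in the same subalgebra, and recentre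
      set c := p.2 * q.2 - ρ (p.2 * q.2) • 1
      have hc : IsCenteredAlternating ρ B C (u ++ (p.1, c) :: v) := by
        have hpq_mem : p.2 * q.2 ∈ cond p.1 B C :=
          mul_mem (isCenteredAlternating_singleton.mp hp).1 (hpq ▸ hq.1)
        exact isCenteredAlternating_append.mpr ⟨hu', isCenteredAlternating_cons.mpr
          ⟨sub_smul_one_mem_and_map_eq_zero hρ1 hpq_mem, hv', hpq ▸ hqv⟩,
          by simpa using hup⟩
      have hsplit : ((u ++ [p]).map Prod.snd).prod * ((q :: v).map Prod.snd).prod =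
          ((u ++ (p.1, c) :: v).map Prod.snd).prod +
            ρ (p.2 * q.2) • ((u.map Prod.snd).prod * (v.map Prod.snd).prod) := by
        simp [c, mul_assoc, mul_sub, sub_mul]
      rw [hsplit]
      exact add_mem hc.prod_mem_span (Submodule.smul_mem _ _ (ih hu' hv'))
    · rw [← List.prod_append, ← List.map_append]
      exact (isCenteredAlternating_append.mpr ⟨hu, hv, by simpa using hpq⟩).prod_mem_span

lemma IsCenteredAlternating.star_reverse (hρ : ∀ a, ρ (star a) = star (ρ a))
    {w : List (Bool × A)} (hw : IsCenteredAlternating ρ B C w) :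
    IsCenteredAlternating ρ B C (w.map fun p ↦ (p.1, star p.2)).reverse := by
  refine ⟨?_, ?_⟩
  · simp only [List.mem_reverse, List.mem_map]
    rintro _ ⟨p, hp, rfl⟩
    obtain ⟨hmem, hzero⟩ := hw.1 p hp
    exact ⟨star_mem (s := cond p.1 B C) hmem, by rw [hρ, hzero, star_zero]⟩
  · rw [List.isChain_reverse, List.isChain_map]
    exact hw.2.imp fun _ _ h ↦ h.symm

lemma one_mem_span_alternatingProds : (1 : A) ∈ Submodule.span ℂ (alternatingProds ρ B C) := by
  simpa using (show IsCenteredAlternating ρ B C [] by simp [IsCenteredAlternating]).prod_mem_span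

lemma star_mem_span_alternatingProds (hρ : ∀ a, ρ (star a) = star (ρ a)) {x : A}
    (hx : x ∈ Submodule.span ℂ (alternatingProds ρ B C)) :
    star x ∈ Submodule.span ℂ (alternatingProds ρ B C) := by
  induction hx using Submodule.span_induction with
  | mem x hx =>
    obtain ⟨w, hw, rfl⟩ := hx
    simpa only [prod_map_star_reverse] using (hw.star_reverse hρ).prod_mem_span
  | zero => simp
  | add x y _ _ hx hy => rw [star_add]; exact add_mem hx hy
  | smul r x _ hx => rw [star_smul]; exact Submodule.smul_mem _ _ hx

lemma exists_mem_cond_of_mem_union {x : A} (hx : x ∈ (B : Set A) ∪ C) :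
    ∃ b, x ∈ cond b B C := by
  rcases hx with hx | hx
  exacts [⟨true, hx⟩, ⟨false, hx⟩]

lemma mem_span_alternatingProds_of_mem_cond (hρ1 : ρ 1 = 1) {b : Bool} {x : A}
    (hx : x ∈ cond b B C) : x ∈ Submodule.span ℂ (alternatingProds ρ B C) := by
  have hletter : IsCenteredAlternating ρ B C [(b, x - ρ x • 1)] :=
    isCenteredAlternating_singleton.mpr (sub_smul_one_mem_and_map_eq_zero hρ1 hx)
  rw [← sub_add_cancel x (ρ x • 1)]
  exact add_mem (by simpa using hletter.prod_mem_span)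
    (Submodule.smul_mem _ _ one_mem_span_alternatingProds)

lemma mem_span_alternatingProds_of_mem_adjoin (hρ1 : ρ 1 = 1)
    (hρ : ∀ a, ρ (star a) = star (ρ a)) {x : A}
    (hx : x ∈ StarAlgebra.adjoin ℂ ((B : Set A) ∪ C)) :
    x ∈ Submodule.span ℂ (alternatingProds ρ B C) := by
  induction hx using StarAlgebra.adjoin_induction with
  | mem x hx =>
    obtain ⟨b, hx⟩ := exists_mem_cond_of_mem_union hx
    exact mem_span_alternatingProds_of_mem_cond hρ1 hx
  | algebraMap r =>
    rw [Algebra.algebraMap_eq_smul_one]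
    exact Submodule.smul_mem _ _ one_mem_span_alternatingProds
  | add x y _ _ hx hy => exact add_mem hx hy
  | mul x y _ _ hx hy =>
    have := Submodule.span_mul_span ℂ (alternatingProds ρ B C) (alternatingProds ρ B C) ▸
      Submodule.mul_mem_mul hx hy
    refine Submodule.span_le.mpr ?_ this
    rintro _ ⟨_, ⟨u, hu, rfl⟩, _, ⟨v, hv, rfl⟩, rfl⟩
    exact hu.prod_mul_prod_mem_span hρ1 hv
  | star x _ hx => exact star_mem_span_alternatingProds hρ hx

end Words

section Freeness

variable {A : Type*} [NormedRing A] [StarRing A] [NormedAlgebra ℂ A] [StarModule ℂ A]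
  {ρ : A →ₗ[ℂ] ℂ} {B C : StarSubalgebra ℂ A}

namespace FreelyIndependent

variable (hfree : FreelyIndependent ρ (B : Set A) (C : Set A))
include hfree

lemma map_prod_eq_zero {w : List (Bool × A)} (hw : IsCenteredAlternating ρ B C w)
    (hne : w ≠ []) : ρ (w.map Prod.snd).prod = 0 := by
  rw [← List.ofFn_getElem_eq_map]
  refine hfree w.length (fun j ↦ w[j].2) (fun j ↦ w[j].1) (fun j ↦ ?_)
    (fun j ↦ (hw.1 _ (by simp)).2) (fun j hj ↦ List.isChain_iff_getElem.mp hw.2 j hj)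
    (List.length_pos_iff.mpr hne)
  have := (hw.1 w[j] (by simp)).1
  cases h : w[j].1 <;> simp_all

lemma map_mul_prod_eq_zero (hρ1 : ρ 1 = 1) {b : Bool} {g : A} (hg : g ∈ cond b B C)
    (hg0 : ρ g = 0) {w : List (Bool × A)} (hw : IsCenteredAlternating ρ B C w)
    (hlen : 2 ≤ w.length) : ρ (g * (w.map Prod.snd).prod) = 0 := by
  obtain ⟨⟨b', a⟩, w, rfl⟩ := List.exists_cons_of_length_pos (by omega : 0 < w.length)
  have hw_ne : w ≠ [] := by rintro rfl; simp at hlen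
  obtain ⟨ha, hw', haw⟩ := isCenteredAlternating_cons.mp hw
  by_cases hbb' : b = b'
  · subst hbb'
    set c := g * a - ρ (g * a) • 1
    have hc : IsCenteredAlternating ρ B C ((b, c) :: w) := isCenteredAlternating_cons.mpr
      ⟨sub_smul_one_mem_and_map_eq_zero hρ1 (mul_mem hg ha.1), hw', haw⟩
    have hsplit : g * (((b, a) :: w).map Prod.snd).prod =
        (((b, c) :: w).map Prod.snd).prod + ρ (g * a) • (w.map Prod.snd).prod := by
      simp [c, mul_assoc, sub_mul]
    rw [hsplit, map_add, map_smul, hfree.map_prod_eq_zero hc (List.cons_ne_nil _ _),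
      hfree.map_prod_eq_zero hw' hw_ne, smul_zero, add_zero]
  · simpa using hfree.map_prod_eq_zero
      ((isCenteredAlternating_cons (p := (b, g))).mpr ⟨⟨hg, hg0⟩, hw, by simpa using hbb'⟩)
      (List.cons_ne_nil _ _)

lemma map_prod_mul_eq_zero (hρ1 : ρ 1 = 1) (hρ : ∀ a, ρ (star a) = star (ρ a)) {b : Bool}
    {g : A} (hg : g ∈ cond b B C) (hg0 : ρ g = 0) {w : List (Bool × A)}
    (hw : IsCenteredAlternating ρ B C w) (hlen : 2 ≤ w.length) :
    ρ ((w.map Prod.snd).prod * g) = 0 := by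
  rw [← star_star ((w.map Prod.snd).prod * g), hρ, star_mul, ← prod_map_star_reverse,
    hfree.map_mul_prod_eq_zero hρ1 (star_mem (s := cond b B C) hg) (by rw [hρ, hg0, star_zero])
      (hw.star_reverse hρ) (by simpa using hlen), star_zero]

variable (hρ1 : ρ 1 = 1) (hρ : ∀ a, ρ (star a) = star (ρ a))
  (htr : ∀ b, ∀ x ∈ cond b B C, ∀ y ∈ cond b B C, ρ (x * y) = ρ (y * x))
include hρ1 hρ htr

lemma map_mul_prod_comm {b : Bool} {g : A} (hg : g ∈ cond b B C) (hg0 : ρ g = 0)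
    {w : List (Bool × A)} (hw : IsCenteredAlternating ρ B C w) :
    ρ (g * (w.map Prod.snd).prod) = ρ ((w.map Prod.snd).prod * g) := by
  rcases w with _ | ⟨⟨b', a⟩, _ | ⟨q, w⟩⟩
  · simp
  · obtain ⟨ha, ha0⟩ := isCenteredAlternating_singleton.mp hw
    by_cases hbb' : b = b'
    · subst hbb'
      simpa using htr b g hg a ha
    · have hga := hfree.map_prod_eq_zero ((isCenteredAlternating_cons (p := (b, g))).mpr
        ⟨⟨hg, hg0⟩, hw, by simpa using hbb'⟩) (List.cons_ne_nil _ _)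
      have hag := hfree.map_prod_eq_zero ((isCenteredAlternating_cons (w := [(b, g)])).mpr
        ⟨⟨ha, ha0⟩, isCenteredAlternating_singleton.mpr ⟨hg, hg0⟩,
          by simpa using Ne.symm hbb'⟩)
        (List.cons_ne_nil _ _)
      simp only [List.map_cons, List.map_nil, List.prod_cons, List.prod_nil, mul_one] at hga hag ⊢
      rw [hga, hag]
  · rw [hfree.map_mul_prod_eq_zero hρ1 hg hg0 hw (by simp),
      hfree.map_prod_mul_eq_zero hρ1 hρ hg hg0 hw (by simp)]

lemma map_mul_comm_of_mem_span {b : Bool} {g : A} (hg : g ∈ cond b B C) {y : A}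
    (hy : y ∈ Submodule.span ℂ (alternatingProds ρ B C)) : ρ (g * y) = ρ (y * g) := by
  induction hy using Submodule.span_induction with
  | mem y hy =>
    obtain ⟨w, hw, rfl⟩ := hy
    obtain ⟨hg', hg'0⟩ := sub_smul_one_mem_and_map_eq_zero hρ1 hg
    have key := hfree.map_mul_prod_comm hρ1 hρ htr hg' hg'0 hw
    rw [← sub_add_cancel g (ρ g • 1)]
    simp only [add_mul, mul_add, map_add, key, smul_mul_assoc, mul_smul_comm, one_mul, mul_one]
  | zero => simp
  | add y z _ _ hy hz => rw [mul_add, add_mul, map_add, map_add, hy, hz]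
  | smul r y _ hy => rw [mul_smul_comm, smul_mul_assoc, map_smul, map_smul, hy]

end FreelyIndependent

end Freeness

lemma map_mul_comm_of_mem_adjoin {A : Type*} [Ring A] [StarRing A] [Algebra ℂ A]
    [StarModule ℂ A] {ρ : A →ₗ[ℂ] ℂ} (hρ : ∀ a, ρ (star a) = star (ρ a)) {s : Set A}
    (hs : ∀ g ∈ s, ∀ y ∈ StarAlgebra.adjoin ℂ s, ρ (g * y) = ρ (y * g)) :
    ∀ x ∈ StarAlgebra.adjoin ℂ s, ∀ y ∈ StarAlgebra.adjoin ℂ s,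
      ρ (x * y) = ρ (y * x) := by
  intro x hx
  induction hx using StarAlgebra.adjoin_induction with
  | mem g hg => exact hs g hg
  | algebraMap r => exact fun y _ ↦ by rw [Algebra.commutes]
  | add x₁ x₂ _ _ h₁ h₂ =>
    exact fun y hy ↦ by rw [add_mul, mul_add, map_add, map_add, h₁ y hy, h₂ y hy]
  | mul x₁ x₂ hx₁ hx₂ h₁ h₂ =>
    intro y hy
    rw [mul_assoc, h₁ _ (mul_mem hx₂ hy), mul_assoc, h₂ _ (mul_mem hy hx₁), mul_assoc]
  | star x _ h =>
    intro y hy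
    rw [← star_star y, ← star_mul, ← star_mul, hρ, hρ, h _ (star_mem hy)]

lemma map_mul_comm_of_mem_closure {A : Type*} [Ring A] [Module ℂ A] [TopologicalSpace A]
    [IsTopologicalRing A] {ρ : A →ₗ[ℂ] ℂ} (hρ : Continuous ρ) {s : Set A}
    (hs : ∀ x ∈ s, ∀ y ∈ s, ρ (x * y) = ρ (y * x)) :
    ∀ x ∈ closure s, ∀ y ∈ closure s, ρ (x * y) = ρ (y * x) := by
  intro x hx y hy
  have hEq : Set.EqOn (fun p : A × A ↦ ρ (p.1 * p.2)) (fun p ↦ ρ (p.2 * p.1)) (s ×ˢ s) :=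
    fun p hp ↦ hs p.1 hp.1 p.2 hp.2
  have hxy : (x, y) ∈ closure (s ×ˢ s) := by rw [closure_prod_eq]; exact ⟨hx, hy⟩
  exact hEq.closure (by fun_prop) (by fun_prop) hxy

/-- If `B` and `C` are freely independent unital C*-subalgebras of a C*-probability space
`(A,ρ)` and `ρ` restricts to a trace on each of `B` and `C`, then `ρ` restricts to a trace
on the C*-subalgebra generated by `B` and `C`. -/
theorem stmt10 {A : Type*} [CStarAlgebra A]
    (ρ : A →ₗ[ℂ] ℂ) (hρ1 : ρ 1 = 1) (hρpos : ∀ a : A, 0 ≤ ρ (star a * a))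
    (B C : StarSubalgebra ℂ A)
    (hfree : FreelyIndependent ρ (B : Set A) (C : Set A))
    (htrB : ∀ x ∈ B, ∀ y ∈ B, ρ (x * y) = ρ (y * x))
    (htrC : ∀ x ∈ C, ∀ y ∈ C, ρ (x * y) = ρ (y * x)) :
    ∀ x ∈ (StarAlgebra.adjoin ℂ ((B : Set A) ∪ (C : Set A))).topologicalClosure,
    ∀ y ∈ (StarAlgebra.adjoin ℂ ((B : Set A) ∪ (C : Set A))).topologicalClosure,
      ρ (x * y) = ρ (y * x) := by
  intro x hx y hy
  have hstar := ρ.map_star_of_map_star_mul_self_nonneg hρpos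
  have htr : ∀ b, ∀ x ∈ cond b B C, ∀ y ∈ cond b B C, ρ (x * y) = ρ (y * x) := by
    rintro (_ | _)
    exacts [htrC, htrB]
  have hgen : ∀ g ∈ (B : Set A) ∪ C, ∀ y ∈ StarAlgebra.adjoin ℂ ((B : Set A) ∪ C),
      ρ (g * y) = ρ (y * g) := by
    intro g hg y hy
    obtain ⟨b, hg⟩ := exists_mem_cond_of_mem_union hg
    exact hfree.map_mul_comm_of_mem_span hρ1 hstar htr hg
      (mem_span_alternatingProds_of_mem_adjoin hρ1 hstar hy)
  exact map_mul_comm_of_mem_closure (ρ.continuous_of_map_star_mul_self_nonneg hρpos)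
    (map_mul_comm_of_mem_adjoin hstar hgen) x hx y hy
end

section
/- Let (A,ρ) be a C*-probability space with A ≠ ℂ. If (B,τ) is selfless and θ : (A,ρ) → (B,τ) is an existential embedding, then ρ induces a faithful GNS representation; explicitly, for every nonzero positive a ∈ A there exists x ∈ A with ρ(x a x*) > 0. -/
/-! Write `a = c * c` with `c = √a` self-adjoint; then `θ c ≠ 0`, and faithfulness of the GNS
representation of `τ` gives `y ∈ B` with `τ (y θ(a) y*) = τ (|θ(c) y*|²) > 0`. After rescaling
`a` and `y` into the unit ball, this says that the quantifier-free formula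
`max (-Re ρ(y x y*)) (-1)` with parameter `x := a` takes a negative value at a contraction of
`B`; since `θ` is existential, it does so at a contraction `x` of `A` as well. Hence
`Re ρ(x a x*) > 0`, and `ρ(x a x*) = ρ(|c x*|²) ≥ 0` is real. -/

open scoped ComplexOrder

/-- Evaluation of a *-monomial (a word in variables and their adjoints). -/
def evalWord {A : Type*} [Monoid A] [Star A] {σ : Type*} (a : σ → A)
    (w : List (σ × Bool)) : A :=
  (w.map fun p => if p.2 then star (a p.1) else a p.1).prod

/-- A noncommutative *-polynomial: a finitely supported ℂ-linear combination of words. -/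
abbrev StarPoly (σ : Type*) := (List (σ × Bool)) →₀ ℂ

noncomputable def StarPoly.eval {A : Type*} [Ring A] [StarRing A] [Algebra ℂ A]
    {σ : Type*} (a : σ → A) (p : StarPoly σ) : A :=
  p.sum fun w c => c • evalWord a w

/-- A quantifier-free formula in the language of C*-probability spaces, with m parameter
variables and n quantified variables: a continuous function applied to finitely many
expressions of the form ‖p(x̄,ȳ)‖ and ρ(q(x̄,ȳ)). -/
structure QFFormula (m n : ℕ) where
  k : ℕ
  l : ℕ
  normPolys : Fin k → StarPoly (Fin m ⊕ Fin n)
  statePolys : Fin l → StarPoly (Fin m ⊕ Fin n)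
  f : (Fin k → ℝ) → (Fin l → ℂ) → ℝ
  continuous_f : Continuous fun p : (Fin k → ℝ) × (Fin l → ℂ) => f p.1 p.2

noncomputable def QFFormula.eval {m n : ℕ} (Φ : QFFormula m n) {A : Type*}
    [NormedRing A] [StarRing A] [NormedAlgebra ℂ A] (ρ : A →ₗ[ℂ] ℂ)
    (x : Fin m → A) (y : Fin n → A) : ℝ :=
  Φ.f (fun i => ‖(Φ.normPolys i).eval (Sum.elim x y)‖)
      (fun j => ρ ((Φ.statePolys j).eval (Sum.elim x y)))

/-- A state on a unital C*-algebra. -/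
def IsState {A : Type*} [NormedRing A] [StarRing A] [NormedAlgebra ℂ A]
    (ρ : A →ₗ[ℂ] ℂ) : Prop :=
  ρ 1 = 1 ∧ ∀ a : A, 0 ≤ ρ (star a * a)

/-- An existential map of C*-probability spaces. -/
def IsExistential {A B : Type*}
    [NormedRing A] [StarRing A] [NormedAlgebra ℂ A]
    [NormedRing B] [StarRing B] [NormedAlgebra ℂ B]
    (ρ : A →ₗ[ℂ] ℂ) (τ : B →ₗ[ℂ] ℂ) (θ : A →⋆ₐ[ℂ] B) : Prop :=
  ∀ (m n : ℕ) (Φ : QFFormula m n) (a : Fin m → A), (∀ i, ‖a i‖ ≤ 1) →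
    sInf {r : ℝ | ∃ y : Fin n → A, (∀ j, ‖y j‖ ≤ 1) ∧ Φ.eval ρ a y = r} =
    sInf {r : ℝ | ∃ y : Fin n → B, (∀ j, ‖y j‖ ≤ 1) ∧ Φ.eval τ (fun i => θ (a i)) y = r}

/-- The GNS representation induced by `ρ` is faithful. -/
def FaithfulGNS {A : Type*} [NormedRing A] [StarRing A] [NormedAlgebra ℂ A]
    (ρ : A →ₗ[ℂ] ℂ) : Prop :=
  ∀ a : A, (∀ x : A, ρ (star (a * x) * (a * x)) = 0) → a = 0

/-- `(F, φ)`, together with the embeddings `ι₁, ι₂`, is a realization of the reduced free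
product `(A,ρ) * (B,τ)`: the embeddings are state-preserving, their images are freely
independent and generate `F` as a C*-algebra, and `φ` has faithful GNS representation.
(These properties characterize the reduced free product uniquely.) -/
structure IsReducedFreeProduct {A B F : Type*}
    [NormedRing A] [StarRing A] [NormedAlgebra ℂ A]
    [NormedRing B] [StarRing B] [NormedAlgebra ℂ B]
    [NormedRing F] [StarRing F] [CStarRing F] [NormedAlgebra ℂ F] [StarModule ℂ F]
    (ρ : A →ₗ[ℂ] ℂ) (τ : B →ₗ[ℂ] ℂ) (φ : F →ₗ[ℂ] ℂ)
    (ι₁ : A →⋆ₐ[ℂ] F) (ι₂ : B →⋆ₐ[ℂ] F) : Prop where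
  injective₁ : Function.Injective ι₁
  injective₂ : Function.Injective ι₂
  isState : IsState φ
  state₁ : ∀ a, φ (ι₁ a) = ρ a
  state₂ : ∀ b, φ (ι₂ b) = τ b
  free : FreelyIndependent φ (Set.range ι₁) (Set.range ι₂)
  generates :
    (StarAlgebra.adjoin ℂ (Set.range ι₁ ∪ Set.range ι₂)).topologicalClosure = ⊤
  gnsFaithful : FaithfulGNS φ

/-- A C*-probability space `(A,ρ)` is selfless: `A ≠ ℂ`, `ρ` has faithful GNS
representation, and the first factor embedding `(A,ρ) → (A,ρ) * (A,ρ)` into (any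
C*-realization of) the reduced free product is existential. -/
def Selfless {A : Type u}
    [NormedRing A] [StarRing A] [CStarRing A] [NormedAlgebra ℂ A] [StarModule ℂ A]
    (ρ : A →ₗ[ℂ] ℂ) : Prop :=
  (∃ a : A, ∀ c : ℂ, a ≠ algebraMap ℂ A c) ∧ FaithfulGNS ρ ∧
  ∀ (F : Type u) [CStarAlgebra F], ∀ (φ : F →ₗ[ℂ] ℂ) (ι₁ ι₂ : A →⋆ₐ[ℂ] F),
    IsReducedFreeProduct ρ ρ φ ι₁ ι₂ → IsExistential ρ φ ι₁


lemma IsSelfAdjoint.mul_mul_self_mul_star {R : Type*} [Semiring R] [StarRing R] {c : R}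
    (hc : IsSelfAdjoint c) (y : R) :
    y * (c * c) * star y = star (c * star y) * (c * star y) := by
  rw [star_mul, star_star, hc.star_eq, mul_assoc, mul_assoc, mul_assoc]

lemma Complex.pos_of_nonneg_of_re_pos {z : ℂ} (hz : 0 ≤ z) (hre : 0 < z.re) : 0 < z :=
  Complex.pos_iff.mpr ⟨hre, (Complex.nonneg_iff.mp hz).2⟩

lemma norm_inv_norm_add_one_smul_le_one {E : Type*} [SeminormedAddCommGroup E]
    [NormedSpace ℂ E] (x : E) : ‖(((‖x‖ + 1)⁻¹ : ℝ) : ℂ) • x‖ ≤ 1 := by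
  rw [norm_smul, Complex.norm_real, Real.norm_of_nonneg (by positivity),
    inv_mul_le_iff₀ (by positivity)]
  linarith

section Normed

variable {A : Type*} [NormedRing A] [StarRing A] [NormedAlgebra ℂ A]

lemma re_ofReal_smul_mul_mul_star [StarModule ℂ A] (ρ : A →ₗ[ℂ] ℂ) (s t : ℝ) (x a : A) :
    (ρ (((t : ℂ) • x) * ((s : ℂ) • a) * star ((t : ℂ) • x))).re =
      t * t * s * (ρ (x * a * star x)).re := by
  have : ((t : ℂ) • x) * ((s : ℂ) • a) * star ((t : ℂ) • x) =
      ((t * t * s : ℝ) : ℂ) • (x * a * star x) := by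
    simp only [star_smul, Complex.star_def, Complex.conj_ofReal, smul_mul_assoc,
      mul_smul_comm, smul_smul]
    push_cast
    ring_nf
  rw [this, map_smul, smul_eq_mul, Complex.re_ofReal_mul]

lemma FaithfulGNS.exists_pos {ρ : A →ₗ[ℂ] ℂ} (hρ : FaithfulGNS ρ)
    (hpos : ∀ b : A, 0 ≤ ρ (star b * b)) {c : A} (hc : c ≠ 0) :
    ∃ x : A, 0 < ρ (star (c * x) * (c * x)) := by
  by_contra! h
  exact hc (hρ c fun x => ((hpos _).eq_or_lt.resolve_right (h x)).symm)

end Normed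

-- Truncated at `-1` to be bounded below, so that its infima are not the junk value of `sInf`.
noncomputable def compressionFormula : QFFormula 1 1 where
  k := 0
  l := 1
  normPolys := Fin.elim0
  statePolys := fun _ =>
    Finsupp.single [(Sum.inr 0, false), (Sum.inl 0, false), (Sum.inr 0, true)] 1
  f := fun _ q => max (-(q 0).re) (-1)
  continuous_f :=
    ((Complex.continuous_re.comp ((continuous_apply 0).comp continuous_snd)).neg).max
      continuous_const

lemma compressionFormula_eval {A : Type*} [NormedRing A] [StarRing A] [NormedAlgebra ℂ A]
    (ρ : A →ₗ[ℂ] ℂ) (x y : Fin 1 → A) :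
    compressionFormula.eval ρ x y = max (-(ρ (y 0 * x 0 * star (y 0))).re) (-1) := by
  simp [QFFormula.eval, compressionFormula, StarPoly.eval, evalWord, mul_assoc]

section Existential

variable {A B : Type*} [NormedRing A] [StarRing A] [NormedAlgebra ℂ A]
  [NormedRing B] [StarRing B] [NormedAlgebra ℂ B]
  {ρ : A →ₗ[ℂ] ℂ} {τ : B →ₗ[ℂ] ℂ} {θ : A →⋆ₐ[ℂ] B}

lemma IsExistential.exists_eval_lt (hθ : IsExistential ρ τ θ) {m n : ℕ} (Φ : QFFormula m n)
    {a : Fin m → A} (ha : ∀ i, ‖a i‖ ≤ 1) {c : ℝ} (hc : ∀ y, c ≤ Φ.eval τ (fun i => θ (a i)) y)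
    {y : Fin n → B} (hy : ∀ j, ‖y j‖ ≤ 1) {r : ℝ} (hr : Φ.eval τ (fun i => θ (a i)) y < r) :
    ∃ x : Fin n → A, (∀ j, ‖x j‖ ≤ 1) ∧ Φ.eval ρ a x < r := by
  have hinf := hθ m n Φ a ha
  have hbdd : BddBelow {r : ℝ | ∃ y : Fin n → B, (∀ j, ‖y j‖ ≤ 1) ∧
      Φ.eval τ (fun i => θ (a i)) y = r} := ⟨c, by rintro _ ⟨y, -, rfl⟩; exact hc y⟩
  have hlt := (csInf_le hbdd ⟨y, hy, rfl⟩).trans_lt hr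
  rw [← hinf] at hlt
  obtain ⟨_, ⟨x, hx, rfl⟩, hxr⟩ :=
    exists_lt_of_csInf_lt (by exact ⟨_, 0, fun _ => by simp, rfl⟩) hlt
  exact ⟨x, hx, hxr⟩

lemma IsExistential.exists_re_compression_pos [StarModule ℂ B] (hθ : IsExistential ρ τ θ)
    {a : A} {y : B} (hy : 0 < (τ (y * θ a * star y)).re) :
    ∃ x : A, 0 < (ρ (x * a * star x)).re := by
  set s := (‖a‖ + 1)⁻¹
  set t := (‖y‖ + 1)⁻¹
  have hs : 0 < s := by positivity
  have ht : 0 < t := by positivity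
  have hval :
      compressionFormula.eval τ (fun _ => θ ((s : ℂ) • a)) (fun _ => (t : ℂ) • y) < 0 := by
    rw [compressionFormula_eval, map_smul, re_ofReal_smul_mul_mul_star]
    exact max_lt (by nlinarith [mul_pos (mul_pos ht ht) hs]) (by norm_num)
  obtain ⟨x, -, hx⟩ := hθ.exists_eval_lt compressionFormula
    (fun _ => norm_inv_norm_add_one_smul_le_one a) (fun _ => le_max_right _ _)
    (fun _ => norm_inv_norm_add_one_smul_le_one y) hval
  rw [compressionFormula_eval, mul_smul_comm, smul_mul_assoc, map_smul, smul_eq_mul,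
    Complex.re_ofReal_mul] at hx
  exact ⟨x 0, pos_of_mul_pos_right (by linarith [le_max_left _ _ |>.trans_lt hx]) hs.le⟩

end Existential

theorem stmt14_general {A B : Type u} [CStarAlgebra A] [PartialOrder A] [StarOrderedRing A]
    [CStarAlgebra B]
    (ρ : A →ₗ[ℂ] ℂ) (τ : B →ₗ[ℂ] ℂ) (hρ : IsState ρ) (hτ : IsState τ)
    (hself : Selfless τ)
    (θ : A →⋆ₐ[ℂ] B) (hθinj : Function.Injective θ)
    (hθex : IsExistential ρ τ θ) :
    ∀ a : A, 0 ≤ a → a ≠ 0 → ∃ x : A, 0 < ρ (x * a * star x) := by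
  intro a ha ha0
  set c := CFC.sqrt a
  have hc : IsSelfAdjoint c := .of_nonneg (CFC.sqrt_nonneg a)
  have hcc : c * c = a := CFC.sqrt_mul_sqrt_self a ha
  have hθc : θ c ≠ 0 := by
    rw [ne_eq, map_eq_zero_iff θ hθinj]
    rintro hc0
    exact ha0 (by rw [← hcc, hc0, mul_zero])
  obtain ⟨y, hy⟩ := hself.2.1.exists_pos hτ.2 hθc
  rw [← star_star y, ← (hc.map θ).mul_mul_self_mul_star, ← map_mul, hcc] at hy
  obtain ⟨x, hx⟩ := hθex.exists_re_compression_pos ((Complex.pos_iff.mp hy).1)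
  refine ⟨x, Complex.pos_of_nonneg_of_re_pos ?_ hx⟩
  rw [← hcc, hc.mul_mul_self_mul_star]
  exact hρ.2 _

/-- If `A ≠ ℂ`, `(B,τ)` is selfless and `θ : (A,ρ) → (B,τ)` is an existential embedding,
then `ρ` induces a faithful GNS representation: for every nonzero positive `a ∈ A` there
exists `x ∈ A` with `ρ(x a x*) > 0`. -/
theorem stmt14 {A B : Type u} [CStarAlgebra A] [PartialOrder A] [StarOrderedRing A]
    [CStarAlgebra B]
    (ρ : A →ₗ[ℂ] ℂ) (τ : B →ₗ[ℂ] ℂ) (hρ : IsState ρ) (hτ : IsState τ)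
    (hA : ∃ a : A, ∀ c : ℂ, a ≠ algebraMap ℂ A c)
    (hself : Selfless τ)
    (θ : A →⋆ₐ[ℂ] B) (hθinj : Function.Injective θ) (hθst : ∀ a, τ (θ a) = ρ a)
    (hθex : IsExistential ρ τ θ) :
    ∀ a : A, 0 ≤ a → a ≠ 0 → ∃ x : A, 0 < ρ (x * a * star x) :=
  stmt14_general ρ τ hρ hτ hself θ hθinj hθex
end

section
/- Let M be a positive measure on ℝ with compact support equal to an interval [α,β] with α < β, absolutely continuous with respect to Lebesgue measure, and let b be a self-adjoint element of a C*-probability space (A,τ) with faithful state whose distribution with respect to τ is M (so spectrum(b) = [α,β] and τ(f(b)) = ∫f dM for continuous f). Then the unital C*-algebra C*(1,b) contains a Haar unitary with respect to τ. -/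
/-!
An atomless probability measure `M` on `ℝ` has a continuous distribution function `F`, and `F`
pushes `M` forward to Lebesgue measure on `[0,1]`. Hence `u = exp (2πi F(b))`, which lies in
`C*(1,b)` by the continuous functional calculus, satisfies
`τ(uⁿ) = ∫ exp (2πin F) dM = ∫₀¹ exp (2πint) dt = 0` for `n ≠ 0`.
-/

open scoped ComplexOrder
open MeasureTheory
open Set Filter Complex
open scoped Real

namespace ProbabilityTheory

variable {M : Measure ℝ} [IsProbabilityMeasure M] [NullSingletonClass M]

@[fun_prop]
lemma continuous_cdf : Continuous (cdf M) := by
  refine continuous_iff_continuousAt.2 fun x => ?_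
  rw [(monotone_cdf M).continuousAt_iff_leftLim_eq_rightLim, (cdf M).rightLim_eq]
  have h := (cdf M).measure_singleton x
  rw [measure_cdf, measure_singleton, eq_comm, ENNReal.ofReal_eq_zero] at h
  linarith [(monotone_cdf M).leftLim_le (le_refl x)]

lemma measure_cdf_preimage_Iic {t : ℝ} (ht : t < 1) :
    M (cdf M ⁻¹' Iic t) = ENNReal.ofReal t := by
  set S := cdf M ⁻¹' Iic t
  rcases S.eq_empty_or_nonempty with hS | hS
  · have : t ≤ 0 := ge_of_tendsto' (tendsto_cdf_atBot M) fun x =>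
      le_of_lt (not_le.1 fun h => hS.subset h)
    rw [hS, measure_empty, ENNReal.ofReal_of_nonpos this]
  · obtain ⟨x₀, hx₀⟩ :=
      ((tendsto_cdf_atTop M).eventually (lt_mem_nhds ht)).exists_forall_of_atTop
    have hbdd : BddAbove S := ⟨x₀, fun x hx => not_lt.1 fun h => (hx₀ x h.le).not_ge hx⟩
    set s := sSup S
    have hs : s ∈ S := (isClosed_Iic.preimage continuous_cdf).csSup_mem hS hbdd
    have hSs : S = Iic s :=
      Subset.antisymm (fun x hx => le_csSup hbdd hx) fun x hx => (monotone_cdf M hx).trans hs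
    have hts : t ≤ cdf M s :=
      ge_of_tendsto (continuous_cdf.continuousWithinAt (s := Ioi s)).tendsto
        (eventually_nhdsWithin_of_forall fun y hy =>
          le_of_lt (not_le.1 fun h => not_le.2 hy (le_csSup hbdd h)))
    rw [hSs, ← ofReal_cdf, le_antisymm hs hts]

lemma map_cdf : M.map (cdf M) = volume.restrict (Ioc 0 1) := by
  have hmeas := (continuous_cdf (M := M)).measurable
  refine Measure.ext_of_Iic _ _ fun t => ?_
  rw [Measure.map_apply hmeas measurableSet_Iic, Measure.restrict_apply measurableSet_Iic,
    inter_comm, Ioc_inter_Iic, Real.volume_Ioc, sub_zero]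
  rcases lt_or_ge t 1 with ht | ht
  · rw [measure_cdf_preimage_Iic ht, min_eq_right ht.le]
  · rw [min_eq_left ht, ENNReal.ofReal_one,
      eq_univ_of_forall (s := cdf M ⁻¹' Iic t) fun x => (cdf_le_one M x).trans ht, measure_univ]

end ProbabilityTheory

lemma integral_exp_two_pi_I_int_mul {k : ℤ} (hk : k ≠ 0) :
    ∫ t in (0 : ℝ)..1, Complex.exp (2 * π * I * k * t) = 0 := by
  have hc : 2 * π * I * k ≠ 0 := by simp [hk, Real.pi_ne_zero]
  have h1 : Complex.exp (2 * π * I * k) = 1 := by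
    rw [← Complex.exp_int_mul_two_pi_mul_I k]; ring_nf
  simp [integral_exp_mul_complex hc, h1]

open ProbabilityTheory in
lemma integral_exp_two_pi_I_int_mul_cdf {M : Measure ℝ} [IsProbabilityMeasure M]
    [NullSingletonClass M] {k : ℤ} (hk : k ≠ 0) :
    ∫ x, Complex.exp (2 * π * I * k * cdf M x) ∂M = 0 := by
  refine (integral_map (f := fun t : ℝ => Complex.exp (2 * π * I * k * t))
    continuous_cdf.aemeasurable (by fun_prop)).symm.trans ?_
  rw [map_cdf, ← intervalIntegral.integral_of_le zero_le_one, integral_exp_two_pi_I_int_mul hk]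

section CStarAlgebra

variable {A : Type*} [CStarAlgebra A]

lemma cfc_mem_unitary_of_norm_eq_one {f : ℂ → ℂ} {a : A} [IsStarNormal a]
    (hfc : ContinuousOn f (spectrum ℂ a)) (hf : ∀ z ∈ spectrum ℂ a, ‖f z‖ = 1) :
    cfc f a ∈ unitary A :=
  (cfc_unitary_iff f a).2 fun z hz => by
    rw [RCLike.star_def, Complex.conj_mul', hf z hz]; simp

lemma Unitary.coe_zpow_eq_cfc {f : ℂ → ℂ} {a : A} [IsStarNormal a]
    (hfc : ContinuousOn f (spectrum ℂ a)) (hf : ∀ z ∈ spectrum ℂ a, ‖f z‖ = 1)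
    {u : unitary A} (hu : (u : A) = cfc f a) (n : ℤ) :
    ((u ^ n : unitary A) : A) = cfc (fun z => f z ^ n) a := by
  cases n with
  | ofNat m => simp [hu, cfc_pow f m a]
  | negSucc m =>
    rw [zpow_negSucc, ← Unitary.star_eq_inv, Unitary.coe_star, SubmonoidClass.coe_pow, hu,
      ← cfc_pow f (m + 1) a, ← cfc_star]
    refine cfc_congr fun z hz => ?_
    rw [zpow_negSucc, Complex.star_def, ← Complex.inv_eq_conj (by simp [hf z hz])]

lemma map_cfc_comp_re_eq_integral (τ : A →ₗ[ℂ] ℂ) {M : Measure ℝ} {b : A}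
    (hb : IsSelfAdjoint b)
    (hdist : ∀ f : C(ℝ, ℝ), τ (cfc (⇑f) b) = ((∫ x, f x ∂M : ℝ) : ℂ))
    {h : ℝ → ℂ} (hh : Continuous h) (hint : Integrable h M) :
    τ (cfc (fun z : ℂ => h z.re) b) = ∫ x, h x ∂M := by
  have hdist' (g : ℝ → ℝ) (hg : Continuous g) :
      τ (cfc g b) = ((∫ x, g x ∂M : ℝ) : ℂ) :=
    hdist ⟨g, hg⟩
  have hsplit : (fun z : ℂ => h z.re) =
      fun z : ℂ => (((h z.re).re : ℝ) : ℂ) + I * (((h z.re).im : ℝ) : ℂ) := by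
    funext z; rw [mul_comm, Complex.re_add_im]
  rw [hsplit, cfc_add .., cfc_const_mul .., map_add, map_smul,
    ← cfc_real_eq_complex (fun x => (h x).re) hb, ← cfc_real_eq_complex (fun x => (h x).im) hb,
    hdist' _ (by fun_prop), hdist' _ (by fun_prop), ← integral_re_add_im hint]
  simp [mul_comm]

end CStarAlgebra

theorem stmt19_general {A : Type*} [CStarAlgebra A]
    (τ : A →ₗ[ℂ] ℂ)
    (M : Measure ℝ) [IsProbabilityMeasure M]
    (habs : M ≪ volume)
    (b : A) (hb : IsSelfAdjoint b)
    (hdist : ∀ f : C(ℝ, ℝ), τ (cfc (⇑f) b) = ((∫ x, f x ∂M : ℝ) : ℂ)) :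
    ∃ u : unitary A, (u : A) ∈ (StarAlgebra.adjoin ℂ {b}).topologicalClosure ∧
      ∀ n : ℤ, n ≠ 0 → τ ((u ^ n : unitary A) : A) = 0 := by
  have : NullSingletonClass M := ⟨fun x => habs (measure_singleton x)⟩
  have : IsStarNormal b := hb.isStarNormal
  set e : ℂ → ℂ := fun z => Complex.exp (2 * π * I * ProbabilityTheory.cdf M z.re)
  have he : Continuous e := by fun_prop
  have heb : ∀ z ∈ spectrum ℂ b, ‖e z‖ = 1 := fun z _ => by simp [e, Complex.norm_exp]
  refine ⟨⟨cfc e b, cfc_mem_unitary_of_norm_eq_one he.continuousOn heb⟩,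
    cfc_mem_elemental e b, fun n hn => ?_⟩
  have hen : (fun z => e z ^ n) =
      fun z : ℂ => Complex.exp (2 * π * I * n * ProbabilityTheory.cdf M z.re) := by
    funext z; rw [← Complex.exp_int_mul]; ring_nf
  have hint : Integrable (fun x => Complex.exp (2 * π * I * n * ProbabilityTheory.cdf M x)) M :=
    .of_bound (by fun_prop) 1 (ae_of_all _ fun x => by simp [Complex.norm_exp])
  rw [Unitary.coe_zpow_eq_cfc he.continuousOn heb rfl, hen,
    map_cfc_comp_re_eq_integral τ hb hdist (by fun_prop) hint,
    integral_exp_two_pi_I_int_mul_cdf hn]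

/-- Let `M` be a probability measure on `ℝ`, absolutely continuous with respect to
Lebesgue measure, with compact support equal to an interval `[α,β]`, `α < β`.  Let `b` be
a self-adjoint element of a C*-probability space `(A,τ)` with faithful state whose
distribution with respect to `τ` is `M` (so `spectrum b = [α,β]` and `τ(f(b)) = ∫ f dM`
for continuous `f`).  Then `C*(1,b)` contains a Haar unitary with respect to `τ`. -/
theorem stmt19 {A : Type*} [CStarAlgebra A] [PartialOrder A] [StarOrderedRing A]
    (τ : A →ₗ[ℂ] ℂ) (hτ1 : τ 1 = 1) (hτpos : ∀ x : A, 0 ≤ τ (star x * x))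
    (hfaith : ∀ x : A, τ (star x * x) = 0 → x = 0)
    (α β : ℝ) (hαβ : α < β)
    (M : Measure ℝ) [IsProbabilityMeasure M]
    (hsupp₁ : M (Set.Icc α β)ᶜ = 0)
    (hsupp₂ : ∀ s : Set ℝ, IsOpen s → (s ∩ Set.Icc α β).Nonempty → 0 < M s)
    (habs : M ≪ volume)
    (b : A) (hb : IsSelfAdjoint b)
    (hspec : spectrum ℝ b = Set.Icc α β)
    (hdist : ∀ f : C(ℝ, ℝ), τ (cfc (⇑f) b) = ((∫ x, f x ∂M : ℝ) : ℂ)) :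
    ∃ u : unitary A, (u : A) ∈ (StarAlgebra.adjoin ℂ {b}).topologicalClosure ∧
      ∀ n : ℤ, n ≠ 0 → τ ((u ^ n : unitary A) : A) = 0 :=
  stmt19_general τ M habs b hb hdist
end
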